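/- Let 𝒢 be an e-graph, G its converted circuit, and α a minimal satisfying evaluation of G. Then for every e-class C ∈ 𝒞 there exists at most one e-node u ∈ C with α(∧_u) = 1. -/
import Mathlib


/-- Gate types for a monotone circuit. -/
inductive Gate where
  | AND : Gate
  | OR : Gate
deriving DecidableEq

/-- A weighted cyclic monotone circuit: a directed graph with a set of outputs,
a gate-type function, and a cost function (costs are only meaningful on inputs). -/
structure Circuit (V : Type) where
  edge : V → V → Prop
  isOut : V → Prop
  gate : V → Gate
  cost : V → ℝ

namespace Circuit

variable {V : Type}

/-- The inputs are the vertices of in-degree 0. -/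
def IsInput (G : Circuit V) (u : V) : Prop := ∀ v, ¬ G.edge v u

/-- A valid evaluation: each non-input gate evaluates to its gate function applied to
the values of its in-neighbors. -/
def Valid (G : Circuit V) (α : V → Bool) : Prop :=
  ∀ u : V, ¬ G.IsInput u →
    (α u = true ↔
      match G.gate u with
      | Gate.AND => ∀ v, G.edge v u → α v = true
      | Gate.OR => ∃ v, G.edge v u ∧ α v = true)

/-- An evaluation satisfies the circuit if it is 1 on all outputs. -/
def Satisfies (G : Circuit V) (α : V → Bool) : Prop :=
  ∀ u, G.isOut u → α u = true

/-- The restriction `α|_A`: equal to `α` on `A` and `0` (false) elsewhere. -/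
noncomputable def restrict (α : V → Bool) (A : Set V) : V → Bool :=
  fun u => @ite _ (u ∈ A) (Classical.propDecidable _) (α u) false

/-- A minimal satisfying evaluation: valid, satisfying, and no restriction of its
true set to a proper subset is a valid satisfying evaluation. -/
def MinSat (G : Circuit V) (α : V → Bool) : Prop :=
  G.Valid α ∧ G.Satisfies α ∧
    ∀ A : Set V, A ⊂ {u | α u = true} →
      ¬ (G.Valid (restrict α A) ∧ G.Satisfies (restrict α A))

/-- `α` is acyclic if the subgraph `G[α]` induced by the true vertices has no
directed cycle. -/
def EvalAcyclic (G : Circuit V) (α : V → Bool) : Prop :=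
  ∀ u, ¬ Relation.TransGen (fun a b => G.edge a b ∧ α a = true ∧ α b = true) u u

end Circuit

/-- An e-graph: a finite set `N` of e-nodes partitioned into e-classes (indexed by the
type `C`, via the surjective class map `cls`), a dependency relation `edge ⊆ N × C`,
a set of output classes, and a cost function. -/
structure EGraph (N C : Type) where
  cls : N → C
  surj : Function.Surjective cls
  edge : N → C → Prop
  isOut : C → Prop
  cost : N → ℝ

namespace EGraph

variable {N C : Type}

/-- An extraction, modeled as a partial function `C → Option N`: a choice function
(on its domain) closed under dependencies. -/
def IsExtraction (𝒢 : EGraph N C) (φ : C → Option N) : Prop :=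
  (∀ D u, φ D = some u → 𝒢.cls u = D) ∧
  (∀ D u D', φ D = some u → 𝒢.edge u D' → (φ D').isSome)

/-- A satisfying extraction: an extraction whose domain contains all output classes. -/
def SatExtraction (𝒢 : EGraph N C) (φ : C → Option N) : Prop :=
  𝒢.IsExtraction φ ∧ ∀ D, 𝒢.isOut D → (φ D).isSome

/-- The restriction `φ|_𝒜` of an extraction to a set of classes. -/
noncomputable def restrictExt (φ : C → Option N) (𝒜 : Set C) : C → Option N :=
  fun D => @ite _ (D ∈ 𝒜) (Classical.propDecidable _) (φ D) none

/-- A minimally satisfying extraction: satisfying, and no restriction to a proper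
subset of its domain is a satisfying extraction. -/
def MinSatExtraction (𝒢 : EGraph N C) (φ : C → Option N) : Prop :=
  𝒢.SatExtraction φ ∧
    ∀ 𝒜 : Set C, 𝒜 ⊂ {D | (φ D).isSome = true} →
      ¬ 𝒢.SatExtraction (restrictExt φ 𝒜)

/-- An extraction is acyclic if there is no (nontrivial) selected path from a class
to itself. -/
def ExtAcyclic (𝒢 : EGraph N C) (φ : C → Option N) : Prop :=
  ∀ D, ¬ Relation.TransGen (fun D₁ D₂ => ∃ u, φ D₁ = some u ∧ 𝒢.edge u D₂) D D

/-- Vertices of the converted circuit: an input `x_u` and an AND gate `∧_u` for each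
e-node `u`, and an OR gate `∨_D` for each e-class `D`. -/
inductive Vtx (N C : Type) where
  | x : N → Vtx N C
  | and : N → Vtx N C
  | or : C → Vtx N C

/-- The converted circuit of an e-graph: edges `(∧_u, ∨_D)` for `u ∈ D`,
`(∨_D, ∧_u)` for `(u, D) ∈ ℰ`, and `(x_u, ∧_u)`; outputs `∨_D` for output classes `D`;
gate types AND on `∧_u`, OR on `∨_D`; cost `c(x_u) = c(u)`. -/
def conv (𝒢 : EGraph N C) : Circuit (Vtx N C) where
  edge a b :=
    match a, b with
    | .and u, .or D => 𝒢.cls u = D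
    | .or D, .and u => 𝒢.edge u D
    | .x u, .and v => u = v
    | _, _ => False
  isOut a :=
    match a with
    | .or D => 𝒢.isOut D
    | _ => False
  gate a :=
    match a with
    | .or _ => Gate.OR
    | _ => Gate.AND
  cost a :=
    match a with
    | .x u => 𝒢.cost u
    | _ => 0

/-- The evaluation `α_φ` associated to an extraction `φ`:
`α_φ(x_u) = α_φ(∧_u) = 1` iff `φ(cls u) = u`, and `α_φ(∨_D) = 1` iff `D ∈ dom φ`. -/
noncomputable def evalOf (𝒢 : EGraph N C) (φ : C → Option N) : Vtx N C → Bool :=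
  fun a =>
    match a with
    | .x u => @decide (φ (𝒢.cls u) = some u) (Classical.propDecidable _)
    | .and u => @decide (φ (𝒢.cls u) = some u) (Classical.propDecidable _)
    | .or D => (φ D).isSome

/-- The extraction `φ_α` associated to an evaluation `α`:
`D ∈ dom φ_α` and `φ_α(D) = u` iff `u ∈ D` and `α(∧_u) = 1`. -/
noncomputable def extOf (𝒢 : EGraph N C) (α : Vtx N C → Bool) : C → Option N :=
  fun D =>
    @dite _ (∃ u, 𝒢.cls u = D ∧ α (Vtx.and u) = true) (Classical.propDecidable _)
      (fun h => some h.choose) (fun _ => none)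

end EGraph

/-- in a minimal satisfying evaluation of the converted circuit, every
e-class contains at most one e-node `u` with `α(∧_u) = 1`. -/
theorem stmt4 {N C : Type} [Fintype N] [Fintype C] (𝒢 : EGraph N C)
    (α : EGraph.Vtx N C → Bool) (hα : (𝒢.conv).MinSat α) :
    ∀ u v : N, 𝒢.cls u = 𝒢.cls v →
      α (EGraph.Vtx.and u) = true → α (EGraph.Vtx.and v) = true → u = v := by
  intro u v hcls hu hv
  by_contra hne
  obtain ⟨hval, hsat, hmin⟩ := hα
  classical
  set A : Set (EGraph.Vtx N C) :=
    {w | α w = true ∧ w ≠ EGraph.Vtx.and v ∧ w ≠ EGraph.Vtx.x v} with hA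
  have hmem : ∀ w, Circuit.restrict α A w = true ↔ w ∈ A := by
    intro w
    unfold Circuit.restrict
    split
    · rename_i h
      simp only [hA, Set.mem_setOf_eq] at h ⊢
      simp [h.1, h]
    · rename_i h
      simp [h]
  apply hmin A
  · constructor
    · intro w hw; exact hw.1
    · intro hs
      have : EGraph.Vtx.and v ∈ A := hs hv
      exact this.2.1 rfl
  constructor
  · -- Valid
    intro w hwin
    cases w with
    | x t =>
        exact absurd (fun a ha => by cases a <;> exact ha) hwin
    | and t =>
        show Circuit.restrict α A (EGraph.Vtx.and t) = true ↔
          ∀ a, (𝒢.conv).edge a (EGraph.Vtx.and t) → Circuit.restrict α A a = true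
        by_cases htv : t = v
        · subst htv
          constructor
          · intro h
            have := (hmem _).mp h
            exact absurd rfl this.2.1
          · intro h
            have hx : Circuit.restrict α A (EGraph.Vtx.x t) = true := h _ rfl
            have := (hmem _).mp hx
            exact absurd rfl this.2.2
        · have hne1 : (EGraph.Vtx.and t : EGraph.Vtx N C) ≠ EGraph.Vtx.and v := by
            intro h; exact htv (by injection h)
          have hiff := hval (EGraph.Vtx.and t) hwin
          simp only [EGraph.conv] at hiff
          rw [hmem]
          constructor
          · intro h a ha
            rw [hmem]
            have hαa : α a = true := by
              exact hiff.mp h.1 a ha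
            refine ⟨hαa, ?_, ?_⟩
            · intro he; subst he; exact ha
            · intro he; subst he
              cases ha
              exact htv rfl
          · intro h
            refine ⟨?_, hne1, by intro he; cases he⟩
            apply hiff.mpr
            intro a ha
            exact ((hmem a).mp (h a ha)).1
    | or D =>
        show Circuit.restrict α A (EGraph.Vtx.or D) = true ↔
          ∃ a, (𝒢.conv).edge a (EGraph.Vtx.or D) ∧ Circuit.restrict α A a = true
        have hor_mem : Circuit.restrict α A (EGraph.Vtx.or D) = true ↔
            α (EGraph.Vtx.or D) = true := by
          rw [hmem]
          constructor
          · intro h; exact h.1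
          · intro h; exact ⟨h, (by intro he; cases he), by intro he; cases he⟩
        have hiff := hval (EGraph.Vtx.or D) hwin
        simp only [EGraph.conv] at hiff
        rw [hor_mem]
        constructor
        · intro h
          obtain ⟨a, ha, hαa⟩ := hiff.mp h
          cases a with
          | x s => cases ha
          | or s => cases ha
          | and s =>
            by_cases hsv : s = v
            · subst hsv
              refine ⟨EGraph.Vtx.and u, ?_, ?_⟩
              · show 𝒢.cls u = D
                rw [hcls]; exact ha
              · rw [hmem]
                exact ⟨hu, (by intro he; exact hne (by injection he)),
                  by intro he; cases he⟩
            · refine ⟨EGraph.Vtx.and s, ha, ?_⟩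
              rw [hmem]
              exact ⟨hαa, (by intro he; exact hsv (by injection he)),
                by intro he; cases he⟩
        · intro ⟨a, ha, hαa⟩
          apply hiff.mpr
          exact ⟨a, ha, ((hmem a).mp hαa).1⟩
  · -- Satisfies
    intro w hw
    cases w with
    | x t => cases hw
    | and t => cases hw
    | or D =>
        rw [hmem]
        exact ⟨hsat _ hw, (by intro he; cases he), by intro he; cases he⟩
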